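/- Let R be a complete discrete valuation ring with uniformizer π whose residue field is algebraically closed of characteristic p ≥ 0. Let n, a, b be positive integers with n not divisible by p, gcd(a, n) = 1 and gcd(b, n) = 1. Then the R-algebra homomorphism ψ from B = R[[s,t]]/(π^{n} − s^{a}·t^{b}) to C = R[[z,w]]/(π − z^{a}·w^{b}) determined by s ↦ z^{n} and t ↦ w^{n} is well defined and injective, and C is a finite B-module generated by the monomials z^{i}·w^{j} with 0 ≤ i < n and 0 ≤ j < n. -/

import Mathlib

/-- The ideal `(π^{m} − z^{a}·w^{b})` of `R[[z,w]] = MvPowerSeries (Fin 2) R`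
(with `z = X 0`, `w = X 1`). -/
noncomputable abbrev stmt15.I (R : Type) [CommRing R] (π : R) (m a b : ℕ) :
    Ideal (MvPowerSeries (Fin 2) R) :=
  Ideal.span {(MvPowerSeries.C (σ := Fin 2) (R := R) π) ^ m
    - (MvPowerSeries.X (0 : Fin 2)) ^ a * (MvPowerSeries.X (1 : Fin 2)) ^ b}

/-- The quotient ring `R[[z,w]]/(π^{m} − z^{a}·w^{b})`. -/
abbrev stmt15.Q (R : Type) [CommRing R] (π : R) (m a b : ℕ) : Type :=
  MvPowerSeries (Fin 2) R ⧸ stmt15.I R π m a b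

/-!
The substitution `s ↦ z^n, t ↦ w^n` is `MvPowerSeries.expand n`; its image is the set of series
all of whose exponents are divisible by `n`, i.e. the degree-zero part for the grading of
`R[[z,w]]` by exponents modulo `n`, in which `π` has degree `0` and `u = z^a w^b` has a degree
of order exactly `n` (as `gcd(a, n) = 1`).

If `expand f = (π - u) g`, multiplying by `∑ πⁱ u^(n-1-i)` and taking degree-zero parts kills
every term except `i = n - 1`, so `π^(n-1) expand f = (π^n - u^n) g₀`. Writing `g₀ = expand h`
and using injectivity of `expand` gives `π^(n-1) f = (π^n - s^a t^b) h`; as `π^n - s^a t^b`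
reduces to the nonzero `-s^a t^b` in `(R/π)[[s,t]]`, `π` is a nonzerodivisor modulo it, so
`f ∈ (π^n - s^a t^b)`. Finiteness: the component of degree `(i, j)`, `0 ≤ i, j < n`, is
`z^i w^j` times a series in the image of `expand`.
-/

namespace MvPowerSeries

section Graded

variable {σ R G : Type*} [CommSemiring R] [AddCommGroup G] (χ : (σ →₀ ℕ) →+ G)

def IsGradedHomogeneous (g : G) (f : MvPowerSeries σ R) : Prop :=
  ∀ ⦃d : σ →₀ ℕ⦄, coeff d f ≠ 0 → χ d = g

open Classical in
noncomputable def gradedComponent (g : G) : MvPowerSeries σ R →ₗ[R] MvPowerSeries σ R where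
  toFun f d := if χ d = g then coeff d f else 0
  map_add' f f' := by
    ext d
    change (if χ d = g then coeff d (f + f') else 0 : R) =
      (if χ d = g then coeff d f else 0) + (if χ d = g then coeff d f' else 0)
    rw [map_add, ite_add_ite, add_zero]
  map_smul' r f := by
    ext d
    change (if χ d = g then coeff d (r • f) else 0 : R) = r * (if χ d = g then coeff d f else 0)
    rw [map_smul, smul_eq_mul, mul_ite, mul_zero]

variable {χ}

open Classical in
theorem coeff_gradedComponent (g : G) (d : σ →₀ ℕ) (f : MvPowerSeries σ R) :
    coeff d (gradedComponent χ g f) = if χ d = g then coeff d f else 0 :=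
  rfl

theorem IsGradedHomogeneous.coeff_eq_zero {g : G} {f : MvPowerSeries σ R}
    (hf : IsGradedHomogeneous χ g f) {d : σ →₀ ℕ} (hd : χ d ≠ g) : coeff d f = 0 :=
  not_imp_comm.mp (@hf d) hd

theorem isGradedHomogeneous_gradedComponent (g : G) (f : MvPowerSeries σ R) :
    IsGradedHomogeneous χ g (gradedComponent χ g f) := fun d hd => by
  by_contra h
  exact hd (by rw [coeff_gradedComponent, if_neg h])

theorem isGradedHomogeneous_monomial (d : σ →₀ ℕ) (r : R) :
    IsGradedHomogeneous χ (χ d) (monomial d r) := fun d' hd' => by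
  classical
  rw [coeff_monomial] at hd'
  by_contra h
  exact hd' (if_neg fun hdd => h (congrArg χ hdd))

theorem isGradedHomogeneous_C (r : R) : IsGradedHomogeneous χ 0 (C r : MvPowerSeries σ R) := by
  simpa using isGradedHomogeneous_monomial (χ := χ) 0 r

theorem IsGradedHomogeneous.mul {g g' : G} {f f' : MvPowerSeries σ R}
    (hf : IsGradedHomogeneous χ g f) (hf' : IsGradedHomogeneous χ g' f') :
    IsGradedHomogeneous χ (g + g') (f * f') := fun d hd => by
  classical
  rw [coeff_mul] at hd
  obtain ⟨x, hx, hne⟩ := Finset.exists_ne_zero_of_sum_ne_zero hd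
  rw [← Finset.HasAntidiagonal.mem_antidiagonal.mp hx, map_add, hf (left_ne_zero_of_mul hne),
    hf' (right_ne_zero_of_mul hne)]

theorem IsGradedHomogeneous.pow {g : G} {f : MvPowerSeries σ R}
    (hf : IsGradedHomogeneous χ g f) (k : ℕ) : IsGradedHomogeneous χ (k • g) (f ^ k) := by
  induction k with
  | zero => simpa using isGradedHomogeneous_C (χ := χ) (1 : R)
  | succ k ih => simpa [pow_succ, succ_nsmul] using ih.mul hf

theorem IsGradedHomogeneous.gradedComponent_self {g : G} {f : MvPowerSeries σ R}
    (hf : IsGradedHomogeneous χ g f) : gradedComponent χ g f = f := by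
  ext d
  rw [coeff_gradedComponent]
  split_ifs with h
  · rfl
  · exact (hf.coeff_eq_zero h).symm

theorem IsGradedHomogeneous.gradedComponent_of_ne {g g' : G} {f : MvPowerSeries σ R}
    (hf : IsGradedHomogeneous χ g f) (h : g' ≠ g) : gradedComponent χ g' f = 0 := by
  ext d
  rw [coeff_gradedComponent, map_zero]
  split_ifs with hd
  · exact hf.coeff_eq_zero (hd ▸ h)
  · rfl

theorem IsGradedHomogeneous.gradedComponent_mul {g : G} {f : MvPowerSeries σ R}
    (hf : IsGradedHomogeneous χ g f) (g' : G) (f' : MvPowerSeries σ R) :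
    gradedComponent χ g' (f * f') = f * gradedComponent χ (g' - g) f' := by
  classical
  ext d
  rw [coeff_gradedComponent, coeff_mul, coeff_mul]
  have hdeg : ∀ x ∈ Finset.HasAntidiagonal.antidiagonal d, coeff x.1 f ≠ 0 →
      (χ d = g' ↔ χ x.2 = g' - g) := by
    intro x hx hne
    rw [← Finset.HasAntidiagonal.mem_antidiagonal.mp hx, map_add, hf hne, eq_sub_iff_add_eq,
      add_comm]
  split_ifs with hd
  · refine Finset.sum_congr rfl fun x hx => ?_
    by_cases hne : coeff x.1 f = 0
    · simp [hne]
    · rw [coeff_gradedComponent, if_pos ((hdeg x hx hne).mp hd)]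
  · refine (Finset.sum_eq_zero fun x hx => ?_).symm
    by_cases hne : coeff x.1 f = 0
    · simp [hne]
    · rw [coeff_gradedComponent, if_neg fun h => hd ((hdeg x hx hne).mpr h), mul_zero]

theorem sum_gradedComponent [Fintype G] (f : MvPowerSeries σ R) :
    ∑ g, gradedComponent χ g f = f := by
  classical
  ext d
  simp [map_sum, coeff_gradedComponent]

end Graded

section GradedRing

variable {σ R G : Type*} [CommRing R] [AddCommGroup G] {χ : (σ →₀ ℕ) →+ G}

theorem IsGradedHomogeneous.sub {g : G} {f f' : MvPowerSeries σ R}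
    (hf : IsGradedHomogeneous χ g f) (hf' : IsGradedHomogeneous χ g f') :
    IsGradedHomogeneous χ g (f - f') := fun d hd => by
  by_contra h
  exact hd (by rw [map_sub, hf.coeff_eq_zero h, hf'.coeff_eq_zero h, sub_zero])

theorem pow_sub_pow_mul_gradedComponent_zero {n : ℕ} (hn : n ≠ 0) {v : G}
    (hv : addOrderOf v = n) {x u f g : MvPowerSeries σ R}
    (hx : IsGradedHomogeneous χ 0 x) (hu : IsGradedHomogeneous χ v u)
    (hf : IsGradedHomogeneous χ 0 f) (hfg : f = (x - u) * g) :
    (x ^ n - u ^ n) * gradedComponent χ 0 g = x ^ (n - 1) * f := by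
  have hxu : IsGradedHomogeneous χ 0 (x ^ n - u ^ n) := by
    refine IsGradedHomogeneous.sub (by simpa using hx.pow n) ?_
    simpa [← hv] using hu.pow n
  have hterm : ∀ i ∈ Finset.range n, gradedComponent χ 0 (x ^ i * u ^ (n - 1 - i) * f) =
      if i = n - 1 then x ^ (n - 1) * f else 0 := by
    intro i hi
    have hmono := (hx.pow i).mul (hu.pow (n - 1 - i))
    rw [smul_zero, zero_add] at hmono
    rw [hmono.gradedComponent_mul, zero_sub]
    split_ifs with h
    · subst h
      rw [Nat.sub_self, zero_smul, neg_zero, hf.gradedComponent_self, pow_zero, mul_one]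
    · rw [hf.gradedComponent_of_ne, mul_zero]
      rw [ne_eq, neg_eq_zero, ← addOrderOf_dvd_iff_nsmul_eq_zero, hv]
      intro hdvd
      have := Nat.eq_zero_of_dvd_of_lt hdvd (by omega)
      have := Finset.mem_range.mp hi
      omega
  calc (x ^ n - u ^ n) * gradedComponent χ 0 g
      = gradedComponent χ 0 ((x ^ n - u ^ n) * g) := by
        rw [hxu.gradedComponent_mul, sub_zero]
    _ = ∑ i ∈ Finset.range n, gradedComponent χ 0 (x ^ i * u ^ (n - 1 - i) * f) := by
        rw [← geom_sum₂_mul, mul_assoc, ← hfg, Finset.sum_mul, map_sum]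
    _ = x ^ (n - 1) * f := by
        rw [Finset.sum_congr rfl hterm, Finset.sum_ite_eq', if_pos]
        exact Finset.mem_range.mpr (by omega)

end GradedRing

section Expand

variable (σ : Type*) (n : ℕ)

noncomputable def exponentMod : (σ →₀ ℕ) →+ (σ →₀ ZMod n) :=
  Finsupp.mapRange.addMonoidHom (Nat.castAddMonoidHom (ZMod n))

variable {σ n}

@[simp]
theorem exponentMod_apply (d : σ →₀ ℕ) (i : σ) : exponentMod σ n d i = (d i : ZMod n) :=
  rfl

theorem exponentMod_eq_zero_iff {d : σ →₀ ℕ} : exponentMod σ n d = 0 ↔ ∀ i, n ∣ d i := by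
  simp [Finsupp.ext_iff, ZMod.natCast_eq_zero_iff]

theorem addOrderOf_exponentMod {d : σ →₀ ℕ} {i : σ} (hi : (d i).Coprime n) :
    addOrderOf (exponentMod σ n d) = n := by
  refine Nat.dvd_antisymm ?_ ?_
  · rw [addOrderOf_dvd_iff_nsmul_eq_zero, ← map_nsmul, exponentMod_eq_zero_iff]
    simp
  · have h := addOrderOf_nsmul_eq_zero (exponentMod σ n d)
    rw [← map_nsmul, exponentMod_eq_zero_iff] at h
    exact hi.symm.dvd_of_dvd_mul_right (by simpa using h i)

variable {R : Type*} [CommRing R]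

theorem expand_injective (hn : n ≠ 0) :
    Function.Injective (expand n hn : MvPowerSeries σ R → _) := by
  intro f f' h
  ext d
  rw [← coeff_expand_smul n hn, ← coeff_expand_smul n hn f', h]

theorem span_C_pow_sub_monomial_le_comap_expand (hn : n ≠ 0) (π : R) (d : σ →₀ ℕ) :
    Ideal.span {C π ^ n - monomial d 1} ≤
      (Ideal.span {C π - monomial d 1}).comap (expand n hn) := by
  rw [Ideal.span_le, Set.singleton_subset_iff, SetLike.mem_coe, Ideal.mem_comap,
    Ideal.mem_span_singleton, map_sub, map_pow, expand_C, expand_monomial]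
  simpa [monomial_pow] using sub_dvd_pow_sub_pow (C π) (monomial d (1 : R)) n

theorem isGradedHomogeneous_expand (hn : n ≠ 0) (f : MvPowerSeries σ R) :
    IsGradedHomogeneous (exponentMod σ n) 0 (expand n hn f) := fun d hd => by
  by_contra h
  obtain ⟨i, hi⟩ := not_forall.mp (mt exponentMod_eq_zero_iff.mpr h)
  exact hd (coeff_expand_of_not_dvd n hn f hi)

theorem exists_expand_eq_of_isGradedHomogeneous (hn : n ≠ 0) {F : MvPowerSeries σ R}
    (hF : IsGradedHomogeneous (exponentMod σ n) 0 F) : ∃ f, expand n hn f = F := by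
  obtain ⟨f, hf⟩ : ∃ f : MvPowerSeries σ R, ∀ m, coeff m f = coeff (n • m) F :=
    ⟨fun m => coeff (n • m) F, fun _ => rfl⟩
  refine ⟨f, ?_⟩
  ext d
  by_cases hd : ∀ i, n ∣ d i
  · obtain ⟨m, rfl⟩ : ∃ m, n • m = d :=
      ⟨d.mapRange (· / n) (Nat.zero_div n), by ext i; simp [Nat.mul_div_cancel' (hd i)]⟩
    rw [coeff_expand_smul, hf]
  · obtain ⟨i, hi⟩ := not_forall.mp hd
    rw [coeff_expand_of_not_dvd n hn _ hi, hF.coeff_eq_zero (mt exponentMod_eq_zero_iff.mp hd)]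

theorem exists_monomial_mul_expand_eq (hn : n ≠ 0) {r : σ →₀ ℕ} (hr : ∀ i, r i < n)
    {F : MvPowerSeries σ R} (hF : IsGradedHomogeneous (exponentMod σ n) (exponentMod σ n r) F) :
    ∃ f, monomial r 1 * expand n hn f = F := by
  classical
  obtain ⟨F', hF'⟩ : ∃ F' : MvPowerSeries σ R, ∀ d, coeff d F' = coeff (d + r) F :=
    ⟨fun d => coeff (d + r) F, fun _ => rfl⟩
  obtain ⟨f, hf⟩ := exists_expand_eq_of_isGradedHomogeneous hn (F := F') fun d hd => by
    have := hF (d := d + r) (by rwa [← hF'])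
    rwa [map_add, add_eq_right] at this
  refine ⟨f, ?_⟩
  ext d
  rw [hf, coeff_monomial_mul, one_mul]
  split_ifs with hrd
  · rw [hF', tsub_add_cancel_of_le hrd]
  · -- an exponent congruent to `r` is at least `r`, as `r` is the least residue
    refine (hF.coeff_eq_zero fun hdr => hrd fun i => ?_).symm
    have hi := congrArg (fun c => (c i).val) hdr
    simp only [exponentMod_apply, ZMod.val_natCast, Nat.mod_eq_of_lt (hr i)] at hi
    exact hi ▸ Nat.mod_le _ _

theorem exists_sum_monomial_mul_expand_eq [Fintype σ] [DecidableEq σ] [NeZero n]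
    (F : MvPowerSeries σ R) : ∃ f : (σ →₀ ZMod n) → MvPowerSeries σ R,
      ∑ c, monomial (c.mapRange ZMod.val ZMod.val_zero) 1 * expand n (NeZero.ne n) (f c) = F := by
  have hc (c : σ →₀ ZMod n) : ∃ f, monomial (c.mapRange ZMod.val ZMod.val_zero) 1 *
      expand n (NeZero.ne n) f = gradedComponent (exponentMod σ n) c F := by
    have hrc : exponentMod σ n (c.mapRange ZMod.val ZMod.val_zero) = c := by ext i; simp
    refine exists_monomial_mul_expand_eq _ (fun i => ZMod.val_lt (c i)) ?_
    rw [hrc]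
    exact isGradedHomogeneous_gradedComponent c F
  choose f hf using hc
  exact ⟨f, by simp_rw [hf]; exact sum_gradedComponent F⟩

end Expand

section Regular

variable {σ R : Type*} [CommRing R]

theorem C_dvd_of_map_mk_eq_zero {π : R} {q : MvPowerSeries σ R}
    (hq : map (Ideal.Quotient.mk (Ideal.span {π})) q = 0) : C π ∣ q := by
  have hc (d : σ →₀ ℕ) : ∃ c, c * π = coeff d q := by
    rw [← Ideal.mem_span_singleton', ← Ideal.Quotient.eq_zero_iff_mem, ← coeff_map, hq,
      map_zero]
  choose c hc using hc
  obtain ⟨q', hq'⟩ : ∃ q' : MvPowerSeries σ R, ∀ d, coeff d q' = c d := ⟨c, fun _ => rfl⟩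
  exact ⟨q', by ext d; rw [coeff_C_mul, hq', ← hc, mul_comm]⟩

variable [IsDomain R] {π : R} {G : MvPowerSeries σ R}

theorem mem_span_singleton_of_C_mul_mem (hπ : Prime π)
    (hG : map (Ideal.Quotient.mk (Ideal.span {π})) G ≠ 0) {f : MvPowerSeries σ R}
    (hf : C π * f ∈ Ideal.span {G}) : f ∈ Ideal.span {G} := by
  have : (Ideal.span {π}).IsPrime := (Ideal.span_singleton_prime hπ.ne_zero).mpr hπ
  obtain ⟨q, hq⟩ := Ideal.mem_span_singleton'.mp hf
  have hq0 : map (Ideal.Quotient.mk (Ideal.span {π})) q = 0 := by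
    have := congrArg (map (Ideal.Quotient.mk (Ideal.span {π}))) hq
    rw [map_mul, map_mul, map_C, Ideal.Quotient.mk_singleton_self, map_zero, zero_mul] at this
    exact (mul_eq_zero.mp this).resolve_right hG
  obtain ⟨q', rfl⟩ := C_dvd_of_map_mk_eq_zero hq0
  have hC : (C π : MvPowerSeries σ R) ≠ 0 := (map_ne_zero_iff _ C_injective).mpr hπ.ne_zero
  exact Ideal.mem_span_singleton'.mpr ⟨q', mul_left_cancel₀ hC (by rw [← hq, mul_assoc])⟩

theorem mem_span_singleton_of_C_pow_mul_mem (hπ : Prime π)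
    (hG : map (Ideal.Quotient.mk (Ideal.span {π})) G ≠ 0) {f : MvPowerSeries σ R} {k : ℕ}
    (hf : C π ^ k * f ∈ Ideal.span {G}) : f ∈ Ideal.span {G} := by
  induction k generalizing f with
  | zero => simpa using hf
  | succ k ih =>
    exact mem_span_singleton_of_C_mul_mem hπ hG (ih (by rwa [← mul_assoc, ← pow_succ]))

theorem mem_span_of_expand_mem_span (hπ : Prime π) {n : ℕ} (hn : n ≠ 0) {d : σ →₀ ℕ}
    (hd : addOrderOf (exponentMod σ n d) = n) {f : MvPowerSeries σ R}
    (hf : expand n hn f ∈ Ideal.span {C π - monomial d 1}) :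
    f ∈ Ideal.span {C π ^ n - monomial d 1} := by
  obtain ⟨g, hg⟩ := Ideal.mem_span_singleton'.mp hf
  have hg₀ := pow_sub_pow_mul_gradedComponent_zero hn hd (isGradedHomogeneous_C π)
    (isGradedHomogeneous_monomial d 1) (isGradedHomogeneous_expand hn f) (by rw [← hg, mul_comm])
  obtain ⟨h, hh⟩ := exists_expand_eq_of_isGradedHomogeneous hn
    (isGradedHomogeneous_gradedComponent 0 g)
  have hfh : C π ^ (n - 1) * f = (C π ^ n - monomial d 1) * h := expand_injective hn <| by
    rw [map_mul, map_mul, map_sub, map_pow, map_pow, expand_C, expand_monomial, hh, ← hg₀,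
      monomial_pow, one_pow]
  have hG : map (Ideal.Quotient.mk (Ideal.span {π})) (C π ^ n - monomial d 1) ≠ 0 := by
    have : (Ideal.span {π}).IsPrime := (Ideal.span_singleton_prime hπ.ne_zero).mpr hπ
    rw [map_sub, map_pow, map_C, map_monomial, Ideal.Quotient.mk_singleton_self, map_zero, map_one,
      zero_pow hn, zero_sub, neg_ne_zero]
    intro h
    simpa using congrArg (coeff d) h
  exact mem_span_singleton_of_C_pow_mul_mem hπ hG
    (Ideal.mem_span_singleton'.mpr ⟨h, by rw [hfh, mul_comm]⟩)

end Regular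

section TwoVariables

variable {R : Type*} [CommRing R]

theorem monomial_one_eq_X_zero_pow_mul_X_one_pow (r : Fin 2 →₀ ℕ) :
    (monomial r 1 : MvPowerSeries (Fin 2) R) = X 0 ^ r 0 * X 1 ^ r 1 := by
  rw [X_pow_eq, X_pow_eq, monomial_mul_monomial, one_mul]
  congr
  ext i
  fin_cases i <;> simp

theorem eq_expand_of_coeff {n : ℕ} (hn : n ≠ 0)
    {Φ : MvPowerSeries (Fin 2) R →ₐ[R] MvPowerSeries (Fin 2) R}
    (hΦ : ∀ (f : MvPowerSeries (Fin 2) R) (d : Fin 2 →₀ ℕ), coeff d (Φ f) =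
      if n ∣ d 0 ∧ n ∣ d 1 then coeff (Finsupp.single 0 (d 0 / n) + Finsupp.single 1 (d 1 / n)) f
      else 0) :
    Φ = expand n hn := by
  refine AlgHom.ext fun f => MvPowerSeries.ext fun d => ?_
  rw [hΦ]
  split_ifs with h
  · have hd : d = n • (Finsupp.single 0 (d 0 / n) + Finsupp.single 1 (d 1 / n)) := by
      ext i
      fin_cases i <;> simp [Nat.mul_div_cancel' h.1, Nat.mul_div_cancel' h.2]
    rw [hd, coeff_expand_smul, ← hd]
  · rcases not_and_or.mp h with h | h <;> exact (coeff_expand_of_not_dvd n hn f h).symm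

end TwoVariables

end MvPowerSeries

open MvPowerSeries in
theorem stmt_15_general
    (R : Type) [CommRing R] [IsDomain R] [IsDiscreteValuationRing R]
    (π : R) (hπ : Irreducible π)
    (n a b : ℕ) (hn : 0 < n)
    (han : Nat.gcd a n = 1)
    (Φ : MvPowerSeries (Fin 2) R →ₐ[R] MvPowerSeries (Fin 2) R)
    (hΦ : ∀ (f : MvPowerSeries (Fin 2) R) (d : Fin 2 →₀ ℕ),
      MvPowerSeries.coeff (R := R) d (Φ f) =
        if n ∣ d 0 ∧ n ∣ d 1 then
          MvPowerSeries.coeff (R := R)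
            (Finsupp.single 0 (d 0 / n) + Finsupp.single 1 (d 1 / n)) f
        else 0) :
    ∃ ψ : stmt15.Q R π n a b →+* stmt15.Q R π 1 a b,
      (∀ f : MvPowerSeries (Fin 2) R,
        ψ (Ideal.Quotient.mk (stmt15.I R π n a b) f)
          = Ideal.Quotient.mk (stmt15.I R π 1 a b) (Φ f)) ∧
      Function.Injective ψ ∧
      (letI : Algebra (stmt15.Q R π n a b) (stmt15.Q R π 1 a b) := ψ.toAlgebra
       Submodule.span (stmt15.Q R π n a b)
         {x : stmt15.Q R π 1 a b | ∃ i j : ℕ, i < n ∧ j < n ∧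
           x = (Ideal.Quotient.mk (stmt15.I R π 1 a b) (MvPowerSeries.X (0 : Fin 2))) ^ i
             * (Ideal.Quotient.mk (stmt15.I R π 1 a b) (MvPowerSeries.X (1 : Fin 2))) ^ j}
         = ⊤) := by
  have : NeZero n := ⟨hn.ne'⟩
  obtain rfl := eq_expand_of_coeff hn.ne' hΦ
  set d : Fin 2 →₀ ℕ := Finsupp.single 0 a + Finsupp.single 1 b
  have hI (m : ℕ) : stmt15.I R π m a b = Ideal.span {C π ^ m - monomial d 1} := by
    rw [monomial_one_eq_X_zero_pow_mul_X_one_pow]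
    simp [d]
  have hle : stmt15.I R π n a b ≤ (stmt15.I R π 1 a b).comap (expand n hn.ne') := by
    simpa only [hI, pow_one] using span_C_pow_sub_monomial_le_comap_expand hn.ne' π d
  let ψ : stmt15.Q R π n a b →+* stmt15.Q R π 1 a b :=
    Ideal.quotientMap _ (expand n hn.ne').toRingHom hle
  refine ⟨ψ, fun f => rfl, Ideal.quotientMap_injective' fun f hf => ?_, ?_⟩
  · have hd : addOrderOf (exponentMod (Fin 2) n d) = n :=
      addOrderOf_exponentMod (i := 0) (by simpa [d] using han)
    rw [hI] at hf ⊢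
    exact mem_span_of_expand_mem_span hπ.prime hn.ne' hd (by simpa using hf)
  · let _ := ψ.toAlgebra
    refine Submodule.eq_top_iff'.mpr fun x => ?_
    obtain ⟨F, rfl⟩ := Ideal.Quotient.mk_surjective x
    obtain ⟨f, rfl⟩ := exists_sum_monomial_mul_expand_eq (n := n) F
    rw [map_sum]
    refine Submodule.sum_mem _ fun c _ => ?_
    have hψ : Ideal.Quotient.mk (stmt15.I R π 1 a b) (expand n hn.ne' (f c)) =
        algebraMap (stmt15.Q R π n a b) _ (Ideal.Quotient.mk _ (f c)) := rfl
    rw [map_mul, mul_comm, hψ, ← Algebra.smul_def, monomial_one_eq_X_zero_pow_mul_X_one_pow,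
      map_mul, map_pow, map_pow]
    exact Submodule.smul_mem _ _ (Submodule.subset_span ⟨_, _, ZMod.val_lt _, ZMod.val_lt _, rfl⟩)

/-- Let `R` be a complete discrete valuation ring with uniformizer `π`
whose residue field is algebraically closed of characteristic `p ≥ 0`.  Let `n, a, b` be
positive integers with `n` not divisible by `p`, `gcd(a, n) = 1` and `gcd(b, n) = 1`.
Then the `R`-algebra homomorphism `ψ` from `B = R[[s,t]]/(π^n − s^a·t^b)` to
`C = R[[z,w]]/(π − z^a·w^b)` determined by `s ↦ z^n` and `t ↦ w^n` is well defined and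
injective, and `C` is a finite `B`-module generated by the monomials `z^i·w^j` with
`0 ≤ i < n` and `0 ≤ j < n`.  The underlying substitution `Φ : R[[s,t]] → R[[z,w]]`,
`s ↦ z^n`, `t ↦ w^n`, is characterized on coefficients: the coefficient of `z^i w^j` in
`Φ f` is the coefficient of `s^{i/n} t^{j/n}` in `f` if `n ∣ i` and `n ∣ j`, and `0`
otherwise; "well defined" is expressed by the existence of a ring homomorphism `ψ`
between the quotients compatible with `Φ` and the quotient maps. -/
theorem stmt_15
    (R : Type) [CommRing R] [IsDomain R] [IsDiscreteValuationRing R]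
    [IsAdicComplete (IsLocalRing.maximalIdeal R) R]
    [IsAlgClosed (IsLocalRing.ResidueField R)]
    (p : ℕ) (hp : p = 0 ∨ p.Prime) [CharP (IsLocalRing.ResidueField R) p]
    (π : R) (hπ : Irreducible π)
    (n a b : ℕ) (hn : 0 < n) (ha : 0 < a) (hb : 0 < b)
    (hpn : ¬ p ∣ n) (han : Nat.gcd a n = 1) (hbn : Nat.gcd b n = 1)
    (Φ : MvPowerSeries (Fin 2) R →ₐ[R] MvPowerSeries (Fin 2) R)
    (hΦ : ∀ (f : MvPowerSeries (Fin 2) R) (d : Fin 2 →₀ ℕ),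
      MvPowerSeries.coeff (R := R) d (Φ f) =
        if n ∣ d 0 ∧ n ∣ d 1 then
          MvPowerSeries.coeff (R := R)
            (Finsupp.single 0 (d 0 / n) + Finsupp.single 1 (d 1 / n)) f
        else 0) :
    ∃ ψ : stmt15.Q R π n a b →+* stmt15.Q R π 1 a b,
      (∀ f : MvPowerSeries (Fin 2) R,
        ψ (Ideal.Quotient.mk (stmt15.I R π n a b) f)
          = Ideal.Quotient.mk (stmt15.I R π 1 a b) (Φ f)) ∧
      Function.Injective ψ ∧
      (letI : Algebra (stmt15.Q R π n a b) (stmt15.Q R π 1 a b) := ψ.toAlgebra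
       Submodule.span (stmt15.Q R π n a b)
         {x : stmt15.Q R π 1 a b | ∃ i j : ℕ, i < n ∧ j < n ∧
           x = (Ideal.Quotient.mk (stmt15.I R π 1 a b) (MvPowerSeries.X (0 : Fin 2))) ^ i
             * (Ideal.Quotient.mk (stmt15.I R π 1 a b) (MvPowerSeries.X (1 : Fin 2))) ^ j}
         = ⊤) :=
  stmt_15_general R π hπ n a b hn han Φ hΦ
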